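/- arXiv:1411.6966 — 4 statements merged into one kernel-verified Lean document; each statement's English description precedes it below -/
import Mathlib

section
/- For integers k ≥ 1 and r ≥ 2, the maximum number of edges in a subgraph of the complete r-partite graph K_r(k) (with k vertices in each part) containing no copy of K_r is exactly (C(r,2) - 1)·k². -/
/-!
Every transversal `f : Fin r → Fin k` of `K_r(k)` spans no `K_r` in `G`, so it contains a cross
pair that is not an edge of `G`. A fixed cross pair lies in only `k ^ (r - 2)` of the `k ^ r`
transversals, so at least `k ^ 2` of the `C(r, 2) k ^ 2` edges of `K_r(k)` are missing from `G`.
Deleting all `k ^ 2` edges between two parts attains the bound.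
-/

open Finset Function Fintype

theorem Fintype.card_filter_apply_eq_and_apply_eq {ι β : Type*} [Fintype ι] [DecidableEq ι]
    [Fintype β] [DecidableEq β] {i j : ι} (hij : i ≠ j) (a b : β) :
    #{f : ι → β | f i = a ∧ f j = b} = card β ^ (card ι - 2) := by
  have hfilter : ({f : ι → β | f i = a ∧ f j = b} : Finset _) =
      {f ∈ piFinset (update (fun _ ↦ (univ : Finset β)) i {a}) | f j = b} := by
    rw [piFinset_update_singleton_eq_filter_piFinset_eq (fun _ ↦ univ) i (mem_univ a),
      piFinset_univ, filter_filter]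
  rw [hfilter]
  refine (card_filter_piFinset_eq_of_mem _ _ (by simp [hij.symm])).trans ?_
  simp_rw [apply_update (fun _ s ↦ #s)]
  rw [prod_update_of_mem (by simpa using hij), card_singleton, one_mul, prod_const,
    card_sdiff, card_erase_of_mem (mem_univ _)]
  simp [hij, Nat.sub_sub]

namespace SimpleGraph

variable {ι β : Type*} [Fintype ι] [Fintype β]

theorem degree_comap_fst (H : SimpleGraph ι) [DecidableRel H.Adj] (i : ι) (b : β) :
    (H.comap Prod.fst).degree (i, b) = H.degree i * card β := by
  rw [← card_neighborFinset_eq_degree, ← card_neighborFinset_eq_degree, ← card_univ,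
    ← card_product]
  congr 1
  ext w
  simp

theorem card_edgeFinset_comap_fst (H : SimpleGraph ι) [DecidableRel H.Adj] [Fintype H.edgeSet] :
    #(H.comap (Prod.fst : ι × β → ι)).edgeFinset = #H.edgeFinset * card β ^ 2 := by
  refine Nat.eq_of_mul_eq_mul_left two_pos ?_
  calc 2 * #(H.comap (Prod.fst : ι × β → ι)).edgeFinset
      = ∑ i, ∑ b : β, H.degree i * card β := by
        rw [← sum_degrees_eq_twice_card_edges, Fintype.sum_prod_type]
        simp only [degree_comap_fst]
    _ = (∑ i, H.degree i) * card β ^ 2 := by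
        rw [Finset.sum_mul]
        refine Finset.sum_congr rfl fun i _ ↦ ?_
        rw [Finset.sum_const, Finset.card_univ, smul_eq_mul]
        ring
    _ = 2 * (#H.edgeFinset * card β ^ 2) := by
        rw [sum_degrees_eq_twice_card_edges, mul_assoc]
        congr!

theorem card_edgeFinset_top_sdiff_edge [DecidableEq ι] {i j : ι} (hij : i ≠ j) :
    #((⊤ : SimpleGraph ι) \ edge i j).edgeFinset = (card ι).choose 2 - 1 := by
  have hedge : (edge i j).edgeFinset = {s(i, j)} := by
    simp [edgeFinset, edgeSet_edge_of_ne hij]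
  rw [edgeFinset_sdiff, card_sdiff_of_subset (edgeFinset_mono le_top),
    card_edgeFinset_top_eq_card_choose_two, hedge, card_singleton]

variable [DecidableEq ι] [DecidableEq β]

theorem card_sq_le_card_edgeFinset_sdiff (G : SimpleGraph (ι × β)) [DecidableRel G.Adj]
    (hG : ¬ ∃ f : ι → β, ∀ i j, i ≠ j → G.Adj (i, f i) (j, f j)) :
    card β ^ 2 ≤ #(((⊤ : SimpleGraph ι).comap Prod.fst).edgeFinset \ G.edgeFinset) := by
  push Not at hG
  choose i j hij hnadj using hG
  set M := ((⊤ : SimpleGraph ι).comap Prod.fst).edgeFinset \ G.edgeFinset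
  let e (f : ι → β) : Sym2 (ι × β) := s((i f, f (i f)), (j f, f (j f)))
  have he : ∀ f, e f ∈ M := fun f ↦ by simp [M, e, hij, hnadj]
  have hfiber : ∀ m ∈ M, #{f | e f = m} ≤ card β ^ (card ι - 2) := by
    intro m hm
    induction m using Sym2.ind with | h u v => ?_
    have huv : u.1 ≠ v.1 := by simpa [M] using (mem_sdiff.1 hm).1
    calc #{f | e f = s(u, v)} ≤ #{f : ι → β | f u.1 = u.2 ∧ f v.1 = v.2} := by
          refine card_le_card fun f ↦ ?_
          simp only [mem_filter, mem_univ, true_and, e, Sym2.eq_iff]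
          rintro (⟨rfl, rfl⟩ | ⟨rfl, rfl⟩) <;> simp
      _ = card β ^ (card ι - 2) := card_filter_apply_eq_and_apply_eq huv _ _
  have hcount : card β ^ card ι ≤ card β ^ (card ι - 2) * #M := by
    simpa using card_le_mul_card_image_of_maps_to (s := univ) (fun f _ ↦ he f) _ hfiber
  rcases isEmpty_or_nonempty β with hβ | hβ
  · simp
  have h2 : 2 ≤ card ι := one_lt_card_iff.2 ⟨_, _, hij fun _ ↦ hβ.some⟩
  rw [← Nat.sub_add_cancel h2, pow_add, Nat.add_sub_cancel] at hcount
  exact Nat.le_of_mul_le_mul_left hcount (pow_pos card_pos _)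

theorem card_edgeFinset_add_card_sq_le (G : SimpleGraph (ι × β)) [DecidableRel G.Adj]
    (hle : G ≤ (⊤ : SimpleGraph ι).comap Prod.fst)
    (hG : ¬ ∃ f : ι → β, ∀ i j, i ≠ j → G.Adj (i, f i) (j, f j)) :
    #G.edgeFinset + card β ^ 2 ≤ (card ι).choose 2 * card β ^ 2 := by
  have hsub := edgeFinset_mono hle
  have hmissing := card_sq_le_card_edgeFinset_sdiff G hG
  rw [card_sdiff_of_subset hsub, card_edgeFinset_comap_fst,
    card_edgeFinset_top_eq_card_choose_two] at hmissing
  have hcard_le := card_le_card hsub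
  rw [card_edgeFinset_comap_fst, card_edgeFinset_top_eq_card_choose_two] at hcard_le
  omega

end SimpleGraph

open SimpleGraph in
theorem stmt_0_general (k r : ℕ) (hr : 2 ≤ r) :
    IsGreatest {n : ℕ | ∃ G : SimpleGraph (Fin r × Fin k),
      (∀ u v, G.Adj u v → u.1 ≠ v.1) ∧
      (¬ ∃ f : Fin r → Fin k, ∀ i j : Fin r, i ≠ j → G.Adj (i, f i) (j, f j)) ∧
      G.edgeSet.ncard = n} ((Nat.choose r 2 - 1) * k ^ 2) := by
  constructor
  · obtain ⟨i₀, i₁, h01⟩ : ∃ i j : Fin r, i ≠ j := ⟨⟨0, by omega⟩, ⟨1, by omega⟩, by simp⟩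
    refine ⟨((⊤ : SimpleGraph (Fin r)) \ edge i₀ i₁).comap Prod.fst, fun _ _ h ↦ h.1,
      fun ⟨f, hf⟩ ↦ ?_, ?_⟩
    · simpa [edge_adj] using hf _ _ h01
    · rw [← coe_edgeFinset, Set.ncard_coe_finset, card_edgeFinset_comap_fst,
        card_edgeFinset_top_sdiff_edge h01, Fintype.card_fin, Fintype.card_fin]
  · classical
    rintro n ⟨G, hpart, hG, rfl⟩
    have hbound := card_edgeFinset_add_card_sq_le G (fun u v h ↦ hpart u v h) hG
    rw [Fintype.card_fin, Fintype.card_fin] at hbound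
    rw [← coe_edgeFinset, Set.ncard_coe_finset, Nat.sub_mul, one_mul]
    omega

/-- Turán-type result: the maximum number of edges of a subgraph of the complete
`r`-partite graph `K_r(k)` (parts of size `k`) containing no copy of `K_r`
is exactly `(C(r,2) - 1) * k²`. -/
theorem stmt_0 (k r : ℕ) (hk : 1 ≤ k) (hr : 2 ≤ r) :
    IsGreatest {n : ℕ | ∃ G : SimpleGraph (Fin r × Fin k),
      (∀ u v, G.Adj u v → u.1 ≠ v.1) ∧
      (¬ ∃ f : Fin r → Fin k, ∀ i j : Fin r, i ≠ j → G.Adj (i, f i) (j, f j)) ∧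
      G.edgeSet.ncard = n} ((Nat.choose r 2 - 1) * k ^ 2) :=
  stmt_0_general k r hr
end

section
/- If a subgraph G of the complete r-partite graph K_r(k) has the maximum number of edges subject to containing no K_r, then G contains K_r minus one edge as a subgraph. -/
/-!
Since `G` is `K_r`-free, some cross pair `u v` of `K_r(k)` is not an edge of `G`. Adding it keeps
the graph `r`-partite and increases the number of edges, so by maximality `G ⊔ edge u v` contains
a transversal clique `f`. As `G` has none, this clique uses the new edge `uv`; every other edge of
the clique already lies in `G`, so `f` spans `K_r` minus the edge `uv` in `G`.
-/

namespace SimpleGraph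

variable {V ι α : Type*}

/-- A copy of `K_r` in `K_r(k)`, encoded by its vertex `(i, f i)` in each part `i`. -/
def IsTransversalClique (G : SimpleGraph (ι × α)) (f : ι → α) : Prop :=
  ∀ i j, i ≠ j → G.Adj (i, f i) (j, f j)

lemma ncard_edgeSet_lt_sup_edge [Finite V] {G : SimpleGraph V} {u v : V} (huv : u ≠ v)
    (hG : ¬G.Adj u v) : G.edgeSet.ncard < (G ⊔ edge u v).edgeSet.ncard :=
  Set.ncard_lt_ncard (edgeSet_ssubset_edgeSet.2 (lt_sup_edge G u v huv hG)) (Set.toFinite _)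

lemma eq_or_eq_of_sup_edge_adj {G : SimpleGraph V} {u v a b : V}
    (h : (G ⊔ edge u v).Adj a b) (hG : ¬G.Adj a b) : a = u ∧ b = v ∨ a = v ∧ b = u := by
  rw [sup_adj, edge_adj] at h
  tauto

lemma exists_fst_ne_not_adj [Nonempty α] {G : SimpleGraph (ι × α)}
    (hG : ∀ f, ¬G.IsTransversalClique f) : ∃ u v : ι × α, u.1 ≠ v.1 ∧ ¬G.Adj u v := by
  obtain ⟨a⟩ := ‹Nonempty α›
  by_contra! h
  exact hG (fun _ ↦ a) fun i j hij ↦ h (i, a) (j, a) hij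

variable {G : SimpleGraph (ι × α)} {u v : ι × α} {f : ι → α}

lemma IsTransversalClique.pair_eq_of_sup_edge_of_not_adj
    (hf : (G ⊔ edge u v).IsTransversalClique f) {i j : ι} (hij : i ≠ j)
    (hG : ¬G.Adj (i, f i) (j, f j)) :
    ({i, j} : Set ι) = {u.1, v.1} ∧ f u.1 = u.2 ∧ f v.1 = v.2 := by
  rcases eq_or_eq_of_sup_edge_adj (hf i j hij) hG with ⟨rfl, rfl⟩ | ⟨rfl, rfl⟩
  · exact ⟨rfl, rfl, rfl⟩
  · exact ⟨Set.pair_comm _ _, rfl, rfl⟩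

lemma IsTransversalClique.of_sup_edge (hf : (G ⊔ edge u v).IsTransversalClique f)
    (hG : ∀ f, ¬G.IsTransversalClique f) (huv : ¬G.Adj u v) :
    ¬G.Adj (u.1, f u.1) (v.1, f v.1) ∧
      ∀ i j, i ≠ j → ({i, j} : Set ι) ≠ {u.1, v.1} → G.Adj (i, f i) (j, f j) := by
  refine ⟨fun huv' ↦ ?_, fun i j hij hne ↦ ?_⟩
  · obtain ⟨i, j, hij, hnot⟩ : ∃ i j, i ≠ j ∧ ¬G.Adj (i, f i) (j, f j) := by
      by_contra! h
      exact hG f h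
    obtain ⟨-, hu, hv⟩ := hf.pair_eq_of_sup_edge_of_not_adj hij hnot
    rw [hu, hv] at huv'
    exact huv huv'
  · by_contra hnot
    exact hne (hf.pair_eq_of_sup_edge_of_not_adj hij hnot).1

end SimpleGraph

theorem stmt_1_general (k r : ℕ) (hk : 1 ≤ k)
    (G : SimpleGraph (Fin r × Fin k))
    (hpart : ∀ u v, G.Adj u v → u.1 ≠ v.1)
    (hKr : ¬ ∃ f : Fin r → Fin k, ∀ i j : Fin r, i ≠ j → G.Adj (i, f i) (j, f j))
    (hmax : ∀ G' : SimpleGraph (Fin r × Fin k),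
      (∀ u v, G'.Adj u v → u.1 ≠ v.1) →
      (¬ ∃ f : Fin r → Fin k, ∀ i j : Fin r, i ≠ j → G'.Adj (i, f i) (j, f j)) →
      G'.edgeSet.ncard ≤ G.edgeSet.ncard) :
    ∃ (f : Fin r → Fin k) (i₀ j₀ : Fin r), i₀ ≠ j₀ ∧
      ¬ G.Adj (i₀, f i₀) (j₀, f j₀) ∧
      ∀ i j : Fin r, i ≠ j → ¬(({i, j} : Set (Fin r)) = {i₀, j₀}) →
        G.Adj (i, f i) (j, f j) := by
  have : Nonempty (Fin k) := ⟨⟨0, hk⟩⟩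
  have hG : ∀ f, ¬G.IsTransversalClique f := fun f hf ↦ hKr ⟨f, hf⟩
  obtain ⟨u, v, huv, hnot⟩ := SimpleGraph.exists_fst_ne_not_adj hG
  have hpart' : ∀ a b, (G ⊔ SimpleGraph.edge u v).Adj a b → a.1 ≠ b.1 := fun a b hab ↦ by
    by_cases hab' : G.Adj a b
    · exact hpart a b hab'
    · rcases SimpleGraph.eq_or_eq_of_sup_edge_adj hab hab' with ⟨rfl, rfl⟩ | ⟨rfl, rfl⟩
      exacts [huv, huv.symm]
  obtain ⟨f, hf⟩ : ∃ f, (G ⊔ SimpleGraph.edge u v).IsTransversalClique f := by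
    by_contra h
    exact (hmax _ hpart' h).not_gt
      (SimpleGraph.ncard_edgeSet_lt_sup_edge (fun h ↦ huv (congrArg Prod.fst h)) hnot)
  obtain ⟨hmissing, hrest⟩ := hf.of_sup_edge hG hnot
  exact ⟨f, u.1, v.1, huv, hmissing, hrest⟩

/-- An edge-maximum `K_r`-free subgraph of the complete `r`-partite graph `K_r(k)`
contains `K_r` minus one edge as a subgraph. -/
theorem stmt_1 (k r : ℕ) (hk : 1 ≤ k) (hr : 2 ≤ r)
    (G : SimpleGraph (Fin r × Fin k))
    (hpart : ∀ u v, G.Adj u v → u.1 ≠ v.1)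
    (hKr : ¬ ∃ f : Fin r → Fin k, ∀ i j : Fin r, i ≠ j → G.Adj (i, f i) (j, f j))
    (hmax : ∀ G' : SimpleGraph (Fin r × Fin k),
      (∀ u v, G'.Adj u v → u.1 ≠ v.1) →
      (¬ ∃ f : Fin r → Fin k, ∀ i j : Fin r, i ≠ j → G'.Adj (i, f i) (j, f j)) →
      G'.edgeSet.ncard ≤ G.edgeSet.ncard) :
    ∃ (f : Fin r → Fin k) (i₀ j₀ : Fin r), i₀ ≠ j₀ ∧
      ¬ G.Adj (i₀, f i₀) (j₀, f j₀) ∧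
      ∀ i j : Fin r, i ≠ j → ¬(({i, j} : Set (Fin r)) = {i₀, j₀}) →
        G.Adj (i, f i) (j, f j) :=
  stmt_1_general k r hk G hpart hKr hmax
end

section
/- Let G be a spanning subgraph of a graph Γ on disjoint sets A, B, and suppose every pair (U,W) with U ⊆ A, W ⊆ B, |U| ≥ ε'|A|, |W| ≥ ε'|B| satisfies |d_{Γ,p}(U,W) − 1| ≤ δ. If (A,B) is (ε,p)-regular in G with ε ≥ ε', then (A,B) is (ε + 2δ, p)-regular in the complement graph Γ − G (restricted to the Γ-edges between A and B). -/
/-!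
Writing `d_{Γ-G,p} = d_{Γ,p} - d_{G,p}`, the deviation of `Γ - G` on a pair `(U,W)` from its value
on `(A,B)` is at most the deviation of `G` (at most `ε` by regularity) plus the deviations of `Γ`
from `1` on `(A,B)` and on `(U,W)` (each at most `δ`). Nonnegativity of `δ` comes for free from
the concentration hypothesis at `(A,B)` itself, and it makes `(ε+2δ)`-large pairs `ε`-large.
-/

/-- Number of edges of `G` between the finsets `A` and `B`. -/
noncomputable def crossEdges {V : Type*} (G : SimpleGraph V) (A B : Finset V) : ℕ :=
  {ab : V × V | ab.1 ∈ A ∧ ab.2 ∈ B ∧ G.Adj ab.1 ab.2}.ncard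

/-- The `p`-density `d_{G,p}(A,B) = e_G(A,B)/(p|A||B|)`. -/
noncomputable def pdens {V : Type*} (G : SimpleGraph V) (p : ℝ) (A B : Finset V) : ℝ :=
  (crossEdges G A B : ℝ) / (p * A.card * B.card)

theorem abs_sub_sub_sub_le {α : Type*} [AddCommGroup α] [LinearOrder α] [IsOrderedAddMonoid α]
    (a b a' b' c : α) : |(a - b) - (a' - b')| ≤ |a - c| + |a' - c| + |b - b'| :=
  calc |(a - b) - (a' - b')| = |((a - c) - (a' - c)) - (b - b')| := by congr 1; abel
    _ ≤ |(a - c) - (a' - c)| + |b - b'| := abs_sub _ _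
    _ ≤ |a - c| + |a' - c| + |b - b'| := add_le_add_left (abs_sub _ _) _

section

variable {V : Type*}

theorem mul_card_le_of_le {ε η m : ℝ} (h : ε ≤ η) {s : Finset V} (hm : η * s.card ≤ m) :
    ε * s.card ≤ m :=
  (mul_le_mul_of_nonneg_right h s.card.cast_nonneg).trans hm

/-- With `d = pdens G p` this is `(ε,p)`-regularity of `(A,B)` in `G`. -/
def IsRegularPair (d : Finset V → Finset V → ℝ) (ε : ℝ) (A B : Finset V) : Prop :=
  ∀ U ⊆ A, ∀ W ⊆ B, ε * A.card ≤ (U.card : ℝ) → ε * B.card ≤ (W.card : ℝ) →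
    |d A B - d U W| ≤ ε

def IsConcentratedPair (d : Finset V → Finset V → ℝ) (c δ ε : ℝ) (A B : Finset V) : Prop :=
  ∀ U ⊆ A, ∀ W ⊆ B, ε * A.card ≤ (U.card : ℝ) → ε * B.card ≤ (W.card : ℝ) →
    |d U W - c| ≤ δ

variable {d e : Finset V → Finset V → ℝ} {c δ ε ε' : ℝ} {A B : Finset V}

theorem IsConcentratedPair.mono (h : IsConcentratedPair d c δ ε' A B) (hε : ε' ≤ ε) :
    IsConcentratedPair d c δ ε A B :=
  fun U hU W hW hUc hWc => h U hU W hW (mul_card_le_of_le hε hUc) (mul_card_le_of_le hε hWc)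

theorem IsRegularPair.sub_of_isConcentratedPair (hd : IsRegularPair d ε A B)
    (he : IsConcentratedPair e c δ ε A B) (hAB : |e A B - c| ≤ δ) :
    IsRegularPair (fun U W => e U W - d U W) (ε + 2 * δ) A B := by
  intro U hU W hW hUc hWc
  have hδ : 0 ≤ δ := (abs_nonneg _).trans hAB
  have hεε : ε ≤ ε + 2 * δ := by linarith
  have hεU := mul_card_le_of_le hεε hUc
  have hεW := mul_card_le_of_le hεε hWc
  calc |(e A B - d A B) - (e U W - d U W)|
      ≤ |e A B - c| + |e U W - c| + |d A B - d U W| := abs_sub_sub_sub_le _ _ _ _ _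
    _ ≤ δ + δ + ε :=
      add_le_add (add_le_add hAB (he U hU W hW hεU hεW)) (hd U hU W hW hεU hεW)
    _ = ε + 2 * δ := by ring

end

theorem stmt_11_general {V : Type*} (G Γ : SimpleGraph V) (p ε ε' δ : ℝ)
    (hε'1 : ε' ≤ 1) (hε' : ε' ≤ ε)
    (A B : Finset V)
    (hΓ : ∀ U ⊆ A, ∀ W ⊆ B, ε' * A.card ≤ (U.card : ℝ) → ε' * B.card ≤ (W.card : ℝ) →
      |pdens Γ p U W - 1| ≤ δ)
    (hreg : ∀ U ⊆ A, ∀ W ⊆ B, ε * A.card ≤ (U.card : ℝ) → ε * B.card ≤ (W.card : ℝ) →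
      |pdens G p A B - pdens G p U W| ≤ ε) :
    ∀ U ⊆ A, ∀ W ⊆ B,
      (ε + 2 * δ) * A.card ≤ (U.card : ℝ) → (ε + 2 * δ) * B.card ≤ (W.card : ℝ) →
      |(pdens Γ p A B - pdens G p A B) - (pdens Γ p U W - pdens G p U W)| ≤ ε + 2 * δ := by
  have hAB : |pdens Γ p A B - 1| ≤ δ :=
    hΓ A subset_rfl B subset_rfl (mul_le_of_le_one_left A.card.cast_nonneg hε'1)
      (mul_le_of_le_one_left B.card.cast_nonneg hε'1)
  exact IsRegularPair.sub_of_isConcentratedPair (d := pdens G p) hreg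
    (IsConcentratedPair.mono (d := pdens Γ p) hΓ hε') hAB

/-- If every `ε'`-large pair of subsets of `(A,B)` has `Γ`-density within `δ` of `1`,
and `(A,B)` is `(ε,p)`-regular in `G ≤ Γ` with `ε ≥ ε'`, then `(A,B)` is
`(ε+2δ,p)`-regular in the complement `Γ - G` (whose density is
`d_{Γ,p} - d_{G,p}`). -/
theorem stmt_11 {V : Type*} (G Γ : SimpleGraph V) (hsub : G ≤ Γ) (p ε ε' δ : ℝ)
    (hδ : 0 ≤ δ) (hε'0 : 0 ≤ ε') (hε'1 : ε' ≤ 1) (hε' : ε' ≤ ε)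
    (A B : Finset V)
    (hΓ : ∀ U ⊆ A, ∀ W ⊆ B, ε' * A.card ≤ (U.card : ℝ) → ε' * B.card ≤ (W.card : ℝ) →
      |pdens Γ p U W - 1| ≤ δ)
    (hreg : ∀ U ⊆ A, ∀ W ⊆ B, ε * A.card ≤ (U.card : ℝ) → ε * B.card ≤ (W.card : ℝ) →
      |pdens G p A B - pdens G p U W| ≤ ε) :
    ∀ U ⊆ A, ∀ W ⊆ B,
      (ε + 2 * δ) * A.card ≤ (U.card : ℝ) → (ε + 2 * δ) * B.card ≤ (W.card : ℝ) →
      |(pdens Γ p A B - pdens G p A B) - (pdens Γ p U W - pdens G p U W)| ≤ ε + 2 * δ :=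
  stmt_11_general G Γ p ε ε' δ hε'1 hε' A B hΓ hreg
end

section
/- Let ε > 0, r ≥ 2, t ≥ 1, and let F be a graph on the vertex set [r] × [t] in which edges only join vertices with distinct first coordinates (i.e., F ⊆ K_r(t)). If F has more than (C(r,2) − 1)·t² edges, then F contains a copy of K_r with one vertex in each of the r coordinate classes. In particular, if at most ε·t² of the C(r,2)·t² cross pairs are missing from K_r(t) and ε < 1, then the resulting graph contains such a K_r. -/
/-!
A transversal `f : Fin r → Fin t` picks one vertex `(i, f i)` from each part. A fixed cross pair of
`K_r(t)` lies inside exactly a `1/t²` fraction of all transversals, so if fewer than `t²` cross pairs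
are missing from `F`, the average number of missing pairs inside a transversal is below `1`, and
some transversal spans a `K_r` of `F`. Since `K_r(t)` has `C(r,2)·t²` edges, both edge conditions
say that fewer than `t²` cross pairs are missing.
-/

open Finset Fintype SimpleGraph

section Transversal

variable {ι β : Type*} [Fintype ι] [DecidableEq ι] [Fintype β] [DecidableEq β]

lemma card_filter_apply_eq_and_apply_eq_mul_sq {a b : ι} (hab : a ≠ b) (x y : β) :
    #{f : ι → β | f a = x ∧ f b = y} * card β ^ 2 = card β ^ card ι := by
  have hfilter : ({f : ι → β | f a = x ∧ f b = y} : Finset _) =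
      {f ∈ piFinset (Function.update (fun _ ↦ (univ : Finset β)) a {x}) | f b = y} := by
    rw [piFinset_update_singleton_eq_filter_piFinset_eq _ a (Finset.mem_univ x), piFinset_univ,
      filter_filter]
  have ha : a ∈ univ.erase b := mem_erase.2 ⟨hab, Finset.mem_univ a⟩
  have hι : 2 ≤ card ι := Fintype.one_lt_card_iff.2 ⟨a, b, hab⟩
  rw [hfilter, card_filter_piFinset_eq_of_mem (α := fun _ ↦ β) _ _ (by simp [hab.symm])]
  simp only [Function.apply_update (fun _ (s : Finset β) ↦ #s)]
  rw [prod_update_of_mem ha, sdiff_singleton_eq_erase, card_singleton, one_mul, prod_const,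
    card_univ, ← pow_add, card_erase_of_mem ha, card_erase_of_mem (Finset.mem_univ b), card_univ]
  congr 1
  omega

lemma card_filter_forall_mem_eq_mul_sq {e : Sym2 (ι × β)}
    (he : e ∈ ((⊤ : SimpleGraph ι).comap Prod.fst).edgeSet) :
    #{f : ι → β | ∀ u ∈ e, f u.1 = u.2} * card β ^ 2 = card β ^ card ι := by
  induction e using Sym2.ind with
  | h u v =>
    simp only [Sym2.forall_mem_pair]
    exact card_filter_apply_eq_and_apply_eq_mul_sq he _ _

lemma sum_card_filter_forall_mem_mul_sq {B : Finset (Sym2 (ι × β))}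
    (hB : ∀ e ∈ B, e ∈ ((⊤ : SimpleGraph ι).comap Prod.fst).edgeSet) :
    (∑ f : ι → β, #{e ∈ B | ∀ u ∈ e, f u.1 = u.2}) * card β ^ 2 = #B * card β ^ card ι := by
  simp only [card_filter]
  rw [sum_comm, sum_mul, ← smul_eq_mul, ← sum_const]
  refine sum_congr rfl fun e he ↦ ?_
  rw [← card_filter]
  exact card_filter_forall_mem_eq_mul_sq (hB e he)

theorem exists_forall_adj_of_ncard_sdiff_lt (G : SimpleGraph (ι × β))
    (h : (((⊤ : SimpleGraph ι).comap Prod.fst).edgeSet \ G.edgeSet).ncard < card β ^ 2) :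
    ∃ f : ι → β, ∀ i j, i ≠ j → G.Adj (i, f i) (j, f j) := by
  classical
  set B := (((⊤ : SimpleGraph ι).comap Prod.fst).edgeSet \ G.edgeSet).toFinset
  have hB : #B < card β ^ 2 := by rwa [← Set.ncard_eq_toFinset_card']
  have hβ : 0 < card β := Nat.pos_of_ne_zero fun h0 ↦ by simp [h0] at hB
  have hsum : ∑ f : ι → β, #{e ∈ B | ∀ u ∈ e, f u.1 = u.2} < ∑ _f : ι → β, 1 := by
    have hcount := sum_card_filter_forall_mem_mul_sq (B := B) fun e he ↦ (Set.mem_toFinset.1 he).1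
    rw [sum_const, card_univ, card_fun, smul_eq_mul, mul_one]
    refine lt_of_mul_lt_mul_right (a := card β ^ 2) ?_ (Nat.zero_le _)
    rw [hcount, mul_comm]
    exact Nat.mul_lt_mul_of_pos_left hB (by positivity)
  obtain ⟨f, -, hf⟩ := exists_lt_of_sum_lt hsum
  refine ⟨f, fun i j hij ↦ ?_⟩
  by_contra hG
  have hmem : s((i, f i), (j, f j)) ∈ ({e ∈ B | ∀ u ∈ e, f u.1 = u.2} : Finset _) := by
    rw [mem_filter, Sym2.forall_mem_pair]
    simp [B, hij, hG]
  exact (card_pos.2 ⟨_, hmem⟩).ne' (Nat.lt_one_iff.1 hf)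

end Transversal

lemma SimpleGraph.fromRel_fst_ne_eq_comap {ι β : Type*} :
    fromRel (fun u v : ι × β ↦ u.1 ≠ v.1) = (⊤ : SimpleGraph ι).comap Prod.fst := by
  ext u v
  simp only [fromRel_adj, comap_adj, top_adj, ne_comm (a := v.1), or_self, and_iff_right_iff_imp]
  exact fun h huv ↦ h (congrArg Prod.fst huv)

lemma SimpleGraph.ncard_edgeSet_completeEquipartiteGraph (r t : ℕ) :
    (completeEquipartiteGraph r t).edgeSet.ncard = r.choose 2 * t ^ 2 := by
  rw [← coe_edgeFinset, Set.ncard_coe_finset, card_edgeFinset_completeEquipartiteGraph]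

theorem stmt_13_general (r t : ℕ) (ht : 1 ≤ t) (ε : ℝ) (hε1 : ε < 1) :
    (∀ F : SimpleGraph (Fin r × Fin t), (∀ u v, F.Adj u v → u.1 ≠ v.1) →
      (Nat.choose r 2 - 1) * t ^ 2 < F.edgeSet.ncard →
      ∃ f : Fin r → Fin t, ∀ i j : Fin r, i ≠ j → F.Adj (i, f i) (j, f j)) ∧
    (∀ F : SimpleGraph (Fin r × Fin t), (∀ u v, F.Adj u v → u.1 ≠ v.1) →
      ((((SimpleGraph.fromRel (fun u v : Fin r × Fin t => u.1 ≠ v.1)).edgeSet \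
          F.edgeSet).ncard : ℝ) ≤ ε * t ^ 2) →
      ∃ f : Fin r → Fin t, ∀ i j : Fin r, i ≠ j → F.Adj (i, f i) (j, f j)) := by
  have key (F : SimpleGraph (Fin r × Fin t))
      (hF : ((completeEquipartiteGraph r t).edgeSet \ F.edgeSet).ncard < t ^ 2) :
      ∃ f : Fin r → Fin t, ∀ i j : Fin r, i ≠ j → F.Adj (i, f i) (j, f j) :=
    exists_forall_adj_of_ncard_sdiff_lt F (by simpa using hF)
  rw [fromRel_fst_ne_eq_comap]
  refine ⟨fun F hF hcard ↦ key F ?_, fun F _ hmiss ↦ key F ?_⟩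
  · have hsub : F.edgeSet ⊆ (completeEquipartiteGraph r t).edgeSet :=
      edgeSet_mono fun u v huv ↦ hF u v huv
    have hsplit := Set.ncard_sdiff_add_ncard_of_subset hsub
    rw [ncard_edgeSet_completeEquipartiteGraph] at hsplit
    rw [Nat.sub_one_mul] at hcard
    omega
  · have ht2 : (0 : ℝ) < t ^ 2 := pow_pos (Nat.cast_pos.2 ht) 2
    exact_mod_cast hmiss.trans_lt (mul_lt_of_lt_one_left ht2 hε1)

/-- A subgraph of the complete `r`-partite graph `K_r(t)` with more than
`(C(r,2)-1)·t²` edges contains a copy of `K_r` (one vertex per part).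
In particular, if at most `ε·t² (ε < 1)` of the cross pairs of `K_r(t)` are
missing, the resulting graph contains such a `K_r`. -/
theorem stmt_13 (r t : ℕ) (hr : 2 ≤ r) (ht : 1 ≤ t) (ε : ℝ) (hε0 : 0 ≤ ε) (hε1 : ε < 1) :
    (∀ F : SimpleGraph (Fin r × Fin t), (∀ u v, F.Adj u v → u.1 ≠ v.1) →
      (Nat.choose r 2 - 1) * t ^ 2 < F.edgeSet.ncard →
      ∃ f : Fin r → Fin t, ∀ i j : Fin r, i ≠ j → F.Adj (i, f i) (j, f j)) ∧
    (∀ F : SimpleGraph (Fin r × Fin t), (∀ u v, F.Adj u v → u.1 ≠ v.1) →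
      ((((SimpleGraph.fromRel (fun u v : Fin r × Fin t => u.1 ≠ v.1)).edgeSet \
          F.edgeSet).ncard : ℝ) ≤ ε * t ^ 2) →
      ∃ f : Fin r → Fin t, ∀ i j : Fin r, i ≠ j → F.Adj (i, f i) (j, f j)) :=
  stmt_13_general r t ht ε hε1
end
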